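/- arXiv:1807.04675 — 3 statements merged into one kernel-verified Lean document; each statement's English description precedes it below -/
import Mathlib

section
/- Let X be a measure space, p ∈ [1,∞), and ζ ∈ AC([0,T]; L^p(X;ℝⁿ)). Then for every t ∈ [0,T], the essential variation essVar(ζ;0,t) (essential supremum over all partitions 0 = s_0 < … < s_m = t of Σ_j |ζ(s_j) − ζ(s_{j-1})|, as measurable functions on X) satisfies essVar(ζ;0,t)(x) = ∫_0^t |ζ̇(r;x)| dr for a.e. x ∈ X, where the right-hand side is a Bochner integral in L^p(X). -/
/-!
For a.e. `x` the identity `ζ t x = ζ 0 x + ∫₀ᵗ dζ(·, x)` holds at countably many times at once, so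
along a partition the increments of `ζ(·, x)` are integrals of `dζ(·, x)` and each variation sum
is at most `∫₀ᵗ ‖dζ(·, x)‖`. Conversely, approximating `dζ(·, x)` in `L¹` by a continuous
function, whose oscillation on short intervals is small, shows that the variation sums along
fine uniform partitions come within any `ε` of that integral; uniform partitions form a
countable family, so an a.e. upper bound of all variation sums dominates the integral a.e.
-/

open MeasureTheory Set Finset intervalIntegral

noncomputable def uniformPartition (a b : ℝ) (N j : ℕ) : ℝ := a + j * ((b - a) / N)

section UniformPartition

variable {a b : ℝ} {N : ℕ}

@[simp]
lemma uniformPartition_zero : uniformPartition a b N 0 = a := by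
  simp [uniformPartition]

lemma uniformPartition_self (hN : N ≠ 0) : uniformPartition a b N N = b := by
  simp only [uniformPartition]
  field_simp
  ring

lemma uniformPartition_succ_sub (j : ℕ) :
    uniformPartition a b N (j + 1) - uniformPartition a b N j = (b - a) / N := by
  simp only [uniformPartition]
  push_cast
  ring

lemma uniformPartition_le_succ (hab : a ≤ b) (j : ℕ) :
    uniformPartition a b N j ≤ uniformPartition a b N (j + 1) :=
  sub_nonneg.1 <| (uniformPartition_succ_sub j).symm ▸ div_nonneg (sub_nonneg.2 hab) N.cast_nonneg

lemma uniformPartition_lt_succ (hab : a < b) (hN : N ≠ 0) (j : ℕ) :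
    uniformPartition a b N j < uniformPartition a b N (j + 1) :=
  sub_pos.1 <| (uniformPartition_succ_sub j).symm ▸
    div_pos (sub_pos.2 hab) (Nat.cast_pos.2 (Nat.pos_of_ne_zero hN))

lemma uniformPartition_mem_Icc (hab : a ≤ b) {j : ℕ} (hj : j ≤ N) :
    uniformPartition a b N j ∈ Icc a b := by
  have hjN : (j : ℝ) / N ≤ 1 := div_le_one_of_le₀ (by exact_mod_cast hj) N.cast_nonneg
  have hba : 0 ≤ b - a := sub_nonneg.2 hab
  have hu : uniformPartition a b N j = a + (j / N) * (b - a) := by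
    simp only [uniformPartition]
    ring
  rw [hu]
  exact ⟨le_add_of_nonneg_right (by positivity), by linarith [mul_le_of_le_one_left hba hjN]⟩

end UniformPartition

section VariationOfPrimitive

variable {E : Type*} [NormedAddCommGroup E] [NormedSpace ℝ E]

theorem sum_norm_integral_le_integral_norm {f : ℝ → E} {m : ℕ} {s : ℕ → ℝ}
    (hs : ∀ j < m, s j ≤ s (j + 1)) (hf : ∀ j < m, IntervalIntegrable f volume (s j) (s (j + 1))) :
    ∑ j ∈ range m, ‖∫ r in s j..s (j + 1), f r‖ ≤ ∫ r in s 0..s m, ‖f r‖ := by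
  rw [← sum_integral_adjacent_intervals fun j hj => (hf j hj).norm]
  exact sum_le_sum fun j hj => norm_integral_le_integral_norm (hs j (mem_range.1 hj))

theorem integral_norm_le_norm_integral_add_of_norm_sub_le [CompleteSpace E] {g : ℝ → E}
    {a b η : ℝ} (hab : a ≤ b)
    (hg : IntervalIntegrable g volume a b) (hη : ∀ r ∈ Icc a b, ‖g r - g a‖ ≤ η) :
    ∫ r in a..b, ‖g r‖ ≤ ‖∫ r in a..b, g r‖ + 2 * η * (b - a) := by
  have hga : IntervalIntegrable (fun _ => g a) volume a b := intervalIntegrable_const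
  have hnorm_le : ∫ r in a..b, ‖g r‖ ≤ (b - a) * (‖g a‖ + η) := by
    simpa using integral_mono_on hab hg.norm intervalIntegrable_const fun r hr =>
      (norm_le_norm_add_norm_sub' (g r) (g a)).trans (by linarith [hη r hr])
  have hosc : ‖∫ r in a..b, (g r - g a)‖ ≤ η * (b - a) := by
    simpa [abs_of_nonneg (sub_nonneg.2 hab)] using norm_integral_le_of_norm_le_const
      fun r hr => hη r (Ioc_subset_Icc_self ((uIoc_of_le hab) ▸ hr))
  have hconst : (b - a) * ‖g a‖ ≤ ‖∫ r in a..b, g r‖ + η * (b - a) := by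
    have : (b - a) • g a = (∫ r in a..b, g r) - ∫ r in a..b, (g r - g a) := by
      rw [integral_sub hg hga, intervalIntegral.integral_const, sub_sub_cancel]
    calc (b - a) * ‖g a‖ = ‖(b - a) • g a‖ := by
          rw [norm_smul, Real.norm_of_nonneg (sub_nonneg.2 hab)]
      _ ≤ _ := this ▸ (norm_sub_le _ _).trans (by gcongr)
  linarith

theorem integral_norm_sub_norm_integral_le {f g : ℝ → E} {a b : ℝ} (hab : a ≤ b)
    (hf : IntervalIntegrable f volume a b) (hg : IntervalIntegrable g volume a b) :
    (∫ r in a..b, ‖f r‖) - ‖∫ r in a..b, f r‖ ≤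
      (∫ r in a..b, ‖g r‖) - ‖∫ r in a..b, g r‖ + 2 * ∫ r in a..b, ‖f r - g r‖ := by
  have hnorm : (∫ r in a..b, ‖f r‖) - ∫ r in a..b, ‖g r‖ ≤ ∫ r in a..b, ‖f r - g r‖ := by
    rw [← integral_sub hf.norm hg.norm]
    exact integral_mono_on hab (hf.norm.sub hg.norm) (hf.sub hg).norm
      fun r _ => norm_sub_norm_le _ _
  have hintegral : ‖∫ r in a..b, g r‖ - ‖∫ r in a..b, f r‖ ≤ ∫ r in a..b, ‖f r - g r‖ :=
    calc _ ≤ ‖(∫ r in a..b, g r) - ∫ r in a..b, f r‖ := norm_sub_norm_le _ _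
      _ = ‖(∫ r in a..b, f r) - ∫ r in a..b, g r‖ := norm_sub_rev _ _
      _ ≤ _ := integral_sub hf hg ▸ norm_integral_le_integral_norm hab
  linarith

theorem integral_norm_le_sum_norm_integral_add_of_norm_sub_le [CompleteSpace E] {g : ℝ → E}
    {m : ℕ} {s : ℕ → ℝ} {η : ℝ} (hs : ∀ j < m, s j ≤ s (j + 1))
    (hg : ∀ j < m, IntervalIntegrable g volume (s j) (s (j + 1)))
    (hη : ∀ j < m, ∀ r ∈ Icc (s j) (s (j + 1)), ‖g r - g (s j)‖ ≤ η) :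
    ∫ r in s 0..s m, ‖g r‖ ≤ ∑ j ∈ range m, ‖∫ r in s j..s (j + 1), g r‖ + 2 * η * (s m - s 0) := by
  rw [← sum_integral_adjacent_intervals fun j hj => (hg j hj).norm, ← sum_range_sub, mul_sum,
    ← sum_add_distrib]
  exact sum_le_sum fun j hj => integral_norm_le_norm_integral_add_of_norm_sub_le
    (hs j (mem_range.1 hj)) (hg j (mem_range.1 hj)) (hη j (mem_range.1 hj))

theorem integral_norm_sub_sum_norm_integral_le {f g : ℝ → E} {m : ℕ} {s : ℕ → ℝ}
    (hs : ∀ j < m, s j ≤ s (j + 1)) (hf : ∀ j < m, IntervalIntegrable f volume (s j) (s (j + 1)))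
    (hg : ∀ j < m, IntervalIntegrable g volume (s j) (s (j + 1))) :
    (∫ r in s 0..s m, ‖f r‖) - ∑ j ∈ range m, ‖∫ r in s j..s (j + 1), f r‖ ≤
      (∫ r in s 0..s m, ‖g r‖) - ∑ j ∈ range m, ‖∫ r in s j..s (j + 1), g r‖ +
        2 * ∫ r in s 0..s m, ‖f r - g r‖ := by
  rw [← sum_integral_adjacent_intervals (f := fun r => ‖f r‖) fun j hj => (hf j hj).norm,
    ← sum_integral_adjacent_intervals (f := fun r => ‖g r‖) fun j hj => (hg j hj).norm,
    ← sum_integral_adjacent_intervals (f := fun r => ‖f r - g r‖)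
      fun j hj => ((hf j hj).sub (hg j hj)).norm,
    ← sum_sub_distrib, ← sum_sub_distrib, mul_sum, ← sum_add_distrib]
  exact sum_le_sum fun j hj => integral_norm_sub_norm_integral_le (hs j (mem_range.1 hj))
    (hf j (mem_range.1 hj)) (hg j (mem_range.1 hj))

theorem exists_integral_norm_le_sum_norm_integral_uniformPartition [CompleteSpace E] {f : ℝ → E}
    {a b ε : ℝ} (hab : a ≤ b) (hf : IntegrableOn f (Icc a b)) (hε : 0 < ε) :
    ∃ N : ℕ, N ≠ 0 ∧ ∫ r in a..b, ‖f r‖ ≤ ∑ j ∈ range N,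
      ‖∫ r in uniformPartition a b N j..uniformPartition a b N (j + 1), f r‖ + ε := by
  obtain ⟨g, -, hfg, hg, hgint⟩ :=
    Integrable.exists_hasCompactSupport_integral_sub_le hf (by positivity : 0 < ε / 4)
  have hfg' : ∫ r in a..b, ‖f r - g r‖ ≤ ε / 4 := by
    rwa [integral_of_le hab, ← integral_Icc_eq_integral_Ioc]
  obtain ⟨η, hη0, hη⟩ : ∃ η > 0, 2 * η * (b - a) ≤ ε / 2 := by
    refine ⟨ε / 4 / (b - a + 1), by positivity, ?_⟩
    have hba : 0 ≤ b - a := sub_nonneg.2 hab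
    calc 2 * (ε / 4 / (b - a + 1)) * (b - a) = ε / 2 * ((b - a) / (b - a + 1)) := by ring
      _ ≤ ε / 2 * 1 := by gcongr; exact (div_le_one (by linarith)).2 (by linarith)
      _ = ε / 2 := mul_one _
  obtain ⟨δ, hδ, hgδ⟩ := Metric.uniformContinuousOn_iff.1
    (isCompact_Icc.uniformContinuousOn_of_continuous hg.continuousOn) η hη0
  obtain ⟨N, hN⟩ := exists_nat_gt ((b - a) / δ)
  have hN0 : N ≠ 0 := by
    rintro rfl
    exact (div_nonneg (sub_nonneg.2 hab) hδ.le).not_gt (by exact_mod_cast hN)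
  have hmesh : (b - a) / N < δ := by
    rw [div_lt_iff₀ (Nat.cast_pos.2 (Nat.pos_of_ne_zero hN0))]
    rw [div_lt_iff₀ hδ] at hN
    linarith
  set u := uniformPartition a b N
  have hu_mem : ∀ j ≤ N, u j ∈ Icc a b := fun j hj => uniformPartition_mem_Icc hab hj
  have hpiece : ∀ {h : ℝ → E}, IntegrableOn h (Icc a b) →
      ∀ j < N, IntervalIntegrable h volume (u j) (u (j + 1)) := fun hh j hj =>
    (hh.mono_set (uIcc_subset_Icc (hu_mem j hj.le) (hu_mem (j + 1) hj))).intervalIntegrable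
  have hosc : ∀ j < N, ∀ r ∈ Icc (u j) (u (j + 1)), ‖g r - g (u j)‖ ≤ η := fun j hj r hr => by
    have hr_near : dist r (u j) < δ := by
      rw [Real.dist_eq, abs_of_nonneg (sub_nonneg.2 hr.1)]
      linarith [hr.2, uniformPartition_succ_sub (a := a) (b := b) (N := N) j]
    exact (dist_eq_norm (g r) (g (u j)) ▸ hgδ r
      (Icc_subset_Icc (hu_mem j hj.le).1 (hu_mem (j + 1) hj).2 hr) (u j) (hu_mem j hj.le)
      hr_near).le
  have hu_mono : ∀ j < N, u j ≤ u (j + 1) := fun j _ => uniformPartition_le_succ hab j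
  have hdefect := integral_norm_sub_sum_norm_integral_le hu_mono (hpiece hf) (hpiece hgint)
  have hcont := integral_norm_le_sum_norm_integral_add_of_norm_sub_le hu_mono (hpiece hgint) hosc
  have hu0 : u 0 = a := uniformPartition_zero
  have huN : u N = b := uniformPartition_self hN0
  rw [hu0, huN] at hdefect hcont
  exact ⟨N, hN0, by linarith⟩

end VariationOfPrimitive

section EssentialVariation

variable {X E : Type*} [MeasurableSpace X] {μ : Measure X} [NormedAddCommGroup E]
  [NormedSpace ℝ E] {ζ dζ : ℝ → X → E} {T : ℝ}

theorem ae_sum_norm_sub_eq_sum_norm_integral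
    (hdint : ∀ᵐ x ∂μ, IntegrableOn (fun r => dζ r x) (Icc 0 T))
    (hAC : ∀ t ∈ Icc (0 : ℝ) T, ∀ᵐ x ∂μ, ζ t x = ζ 0 x + ∫ r in (0 : ℝ)..t, dζ r x)
    {m : ℕ} {s : ℕ → ℝ} (hs : ∀ j ≤ m, s j ∈ Icc 0 T) :
    ∀ᵐ x ∂μ, ∑ j ∈ range m, ‖ζ (s (j + 1)) x - ζ (s j) x‖ =
      ∑ j ∈ range m, ‖∫ r in s j..s (j + 1), dζ r x‖ := by
  have hAC_s : ∀ᵐ x ∂μ, ∀ j ∈ range (m + 1), ζ (s j) x = ζ 0 x + ∫ r in (0 : ℝ)..s j, dζ r x :=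
    (Filter.eventually_all_finset _).2 fun j hj => hAC _ (hs j (Nat.lt_succ_iff.1 (mem_range.1 hj)))
  filter_upwards [hdint, hAC_s] with x hx hxs
  have hint : ∀ j ≤ m, IntervalIntegrable (fun r => dζ r x) volume 0 (s j) := fun j hj =>
    (hx.mono_set (uIcc_subset_Icc ⟨le_rfl, (hs j hj).1.trans (hs j hj).2⟩ (hs j hj)))
      |>.intervalIntegrable
  refine sum_congr rfl fun j hj => ?_
  have hj : j < m := mem_range.1 hj
  rw [hxs (j + 1) (mem_range.2 (by omega)), hxs j (mem_range.2 (by omega)),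
    add_sub_add_left_eq_sub, integral_interval_sub_left (hint (j + 1) hj) (hint j hj.le)]

theorem ae_sum_norm_sub_le_integral_norm
    (hdint : ∀ᵐ x ∂μ, IntegrableOn (fun r => dζ r x) (Icc 0 T))
    (hAC : ∀ t ∈ Icc (0 : ℝ) T, ∀ᵐ x ∂μ, ζ t x = ζ 0 x + ∫ r in (0 : ℝ)..t, dζ r x)
    {t : ℝ} (ht : t ≤ T) {m : ℕ} {s : ℕ → ℝ} (hs0 : s 0 = 0) (hsm : s m = t)
    (hs : ∀ j < m, s j < s (j + 1)) :
    ∀ᵐ x ∂μ, ∑ j ∈ range m, ‖ζ (s (j + 1)) x - ζ (s j) x‖ ≤ ∫ r in (0 : ℝ)..t, ‖dζ r x‖ := by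
  have hIcc : Icc 0 t ⊆ Icc 0 T := Icc_subset_Icc_right ht
  have hs_mem : ∀ j ≤ m, s j ∈ Icc 0 t := fun j hj => hs0 ▸ hsm ▸
    ((strictMonoOn_Iic_of_lt_succ hs).monotoneOn.mono Icc_subset_Iic_self).mapsTo_Icc
      ⟨Nat.zero_le j, hj⟩
  filter_upwards [hdint, ae_sum_norm_sub_eq_sum_norm_integral hdint hAC
    fun j hj => hIcc (hs_mem j hj)] with x hx hsum
  rw [hsum, ← hs0, ← hsm]
  exact sum_norm_integral_le_integral_norm (fun j hj => (hs j hj).le) fun j hj =>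
    (hx.mono_set (hIcc.trans' (uIcc_subset_Icc (hs_mem j hj.le) (hs_mem (j + 1) hj))))
      |>.intervalIntegrable

theorem ae_integral_norm_le_of_forall_ae_sum_norm_sub_le [CompleteSpace E]
    (hdint : ∀ᵐ x ∂μ, IntegrableOn (fun r => dζ r x) (Icc 0 T))
    (hAC : ∀ t ∈ Icc (0 : ℝ) T, ∀ᵐ x ∂μ, ζ t x = ζ 0 x + ∫ r in (0 : ℝ)..t, dζ r x)
    {t : ℝ} (ht : t ∈ Icc 0 T) {W : X → ℝ}
    (hW : ∀ (m : ℕ) (s : ℕ → ℝ), s 0 = 0 → s m = t → (∀ j < m, s j < s (j + 1)) →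
      ∀ᵐ x ∂μ, ∑ j ∈ range m, ‖ζ (s (j + 1)) x - ζ (s j) x‖ ≤ W x) :
    ∀ᵐ x ∂μ, ∫ r in (0 : ℝ)..t, ‖dζ r x‖ ≤ W x := by
  have hIcc : Icc 0 t ⊆ Icc 0 T := Icc_subset_Icc_right ht.2
  rcases ht.1.eq_or_lt with rfl | ht0
  · filter_upwards [hW 0 (fun _ => 0) rfl rfl (by simp)] with x hx
    simpa using hx
  have huniform : ∀ᵐ x ∂μ, ∀ N : ℕ, N ≠ 0 → ∑ j ∈ range N,
      ‖∫ r in uniformPartition 0 t N j..uniformPartition 0 t N (j + 1), dζ r x‖ ≤ W x := by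
    refine ae_all_iff.2 fun N => ?_
    rcases eq_or_ne N 0 with rfl | hN
    · exact Filter.Eventually.of_forall fun _ h => absurd rfl h
    filter_upwards [hW N _ uniformPartition_zero (uniformPartition_self hN)
        (fun j _ => uniformPartition_lt_succ ht0 hN j),
      ae_sum_norm_sub_eq_sum_norm_integral hdint hAC
        fun j hj => hIcc (uniformPartition_mem_Icc ht.1 hj)] with x hx hsum _
    exact hsum ▸ hx
  filter_upwards [hdint, huniform] with x hx hxW
  refine le_of_forall_pos_le_add fun ε hε => ?_
  obtain ⟨N, hN, hle⟩ :=
    exists_integral_norm_le_sum_norm_integral_uniformPartition ht.1 (hx.mono_set hIcc) hε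
  linarith [hxW N hN]

end EssentialVariation

theorem stmt_5_general {X : Type*} [MeasurableSpace X] (μ : Measure X)
    (n : ℕ) (T : ℝ)
    (ζ dζ : ℝ → X → EuclideanSpace ℝ (Fin n))
    (hdint : ∀ᵐ x ∂μ, IntegrableOn (fun r => dζ r x) (Set.Icc 0 T))
    (hAC : ∀ t ∈ Set.Icc (0 : ℝ) T,
      ∀ᵐ x ∂μ, ζ t x = ζ 0 x + ∫ r in (0:ℝ)..t, dζ r x) :
    ∀ t ∈ Set.Icc (0 : ℝ) T,
      (∀ (m : ℕ) (s : ℕ → ℝ), s 0 = 0 → s m = t → (∀ j < m, s j < s (j + 1)) →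
        ∀ᵐ x ∂μ, ∑ j ∈ Finset.range m, ‖ζ (s (j + 1)) x - ζ (s j) x‖
          ≤ ∫ r in (0:ℝ)..t, ‖dζ r x‖) ∧
      (∀ W : X → ℝ, Measurable W →
        (∀ (m : ℕ) (s : ℕ → ℝ), s 0 = 0 → s m = t →
          (∀ j < m, s j < s (j + 1)) →
          ∀ᵐ x ∂μ, ∑ j ∈ Finset.range m, ‖ζ (s (j + 1)) x - ζ (s j) x‖ ≤ W x) →
        ∀ᵐ x ∂μ, (∫ r in (0:ℝ)..t, ‖dζ r x‖) ≤ W x) := by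
  intro t ht
  exact ⟨fun m s hs0 hsm hs => ae_sum_norm_sub_le_integral_norm hdint hAC ht.2 hs0 hsm hs,
    fun W _ hW => ae_integral_norm_le_of_forall_ae_sum_norm_sub_le hdint hAC ht hW⟩

/-- For `ζ ∈ AC([0,T]; L^p(X;ℝⁿ))` with a.e. time derivative `dζ`, the
function `x ↦ ∫_0^t |dζ(r;x)| dr` is (a version of) the essential variation
`essVar(ζ; 0, t)`: it dominates, a.e. in `X`, the variation sums of every
partition of `[0,t]`, and it is a.e. below any measurable function with this
property. -/
theorem stmt_5 {X : Type*} [MeasurableSpace X] (μ : Measure X)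
    (n : ℕ) (p T : ℝ) (hp : 1 ≤ p) (hT : 0 < T)
    (ζ dζ : ℝ → X → EuclideanSpace ℝ (Fin n))
    (hζmeas : ∀ t, AEMeasurable (ζ t) μ)
    (hdζmeas : ∀ r, AEMeasurable (dζ r) μ)
    (hLp : ∀ t ∈ Set.Icc (0 : ℝ) T, MemLp (ζ t) (ENNReal.ofReal p) μ)
    (hdint : ∀ᵐ x ∂μ, IntegrableOn (fun r => dζ r x) (Set.Icc 0 T))
    (hAC : ∀ t ∈ Set.Icc (0 : ℝ) T,
      ∀ᵐ x ∂μ, ζ t x = ζ 0 x + ∫ r in (0:ℝ)..t, dζ r x) :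
    ∀ t ∈ Set.Icc (0 : ℝ) T,
      (∀ (m : ℕ) (s : ℕ → ℝ), s 0 = 0 → s m = t → (∀ j < m, s j < s (j + 1)) →
        ∀ᵐ x ∂μ, ∑ j ∈ Finset.range m, ‖ζ (s (j + 1)) x - ζ (s j) x‖
          ≤ ∫ r in (0:ℝ)..t, ‖dζ r x‖) ∧
      (∀ W : X → ℝ, Measurable W →
        (∀ (m : ℕ) (s : ℕ → ℝ), s 0 = 0 → s m = t →
          (∀ j < m, s j < s (j + 1)) →
          ∀ᵐ x ∂μ, ∑ j ∈ Finset.range m, ‖ζ (s (j + 1)) x - ζ (s j) x‖ ≤ W x) →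
        ∀ᵐ x ∂μ, (∫ r in (0:ℝ)..t, ‖dζ r x‖) ≤ W x) :=
  stmt_5_general μ n T ζ dζ hdint hAC
end

section
/- Let G := {h ∈ (H¹(Ω))' : ⟨h,β⟩ ≥ 0 for every β ∈ H¹(Ω) with β ≤ 0 a.e.}, F := {β ∈ H¹(Ω) : β ≤ 0 a.e., ‖β‖_{L²} ≤ 1}, and Φ(g) := sup_{β∈F}⟨−g,β⟩ for g ∈ (H¹(Ω))'. Then Φ(g) = d₂(g,G) := min{‖h‖_{L²} : h ∈ L²(Ω), h + g ∈ G}, for every g for which the minimum problem is nonempty, with the convention Φ(g) = +∞ otherwise. -/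
/-!
The inequality `Φ(g) ≤ ‖h‖` for every feasible `h` is Cauchy–Schwarz. For the converse, with
`M := Φ(g)`, homogeneity of the cone `C` upgrades `-g β ≤ M` on `F` to `-g β ≤ M ‖e β‖` on all of
`C`. Hence the point `(0, -1)` lies outside the closure of the convex cone
`{(w, s) ∈ L² × ℝ | ∃ β ∈ C, M ‖w - e β‖ ≤ s - g β}`, and a separating functional, read through
the Riesz representation, is a feasible `h` with `‖h‖ ≤ M`.
-/

open RealInnerProductSpace Filter Topology

theorem exists_forall_le_zero_of_notMem_closure_of_cone {E : Type*} [AddCommGroup E]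
    [TopologicalSpace E] [IsTopologicalAddGroup E] [Module ℝ E] [ContinuousSMul ℝ E]
    [LocallyConvexSpace ℝ E] {Q : Set E} {x : E} (hconv : Convex ℝ Q)
    (hcone : ∀ c : ℝ, 0 < c → ∀ y ∈ Q, c • y ∈ Q) (hzero : (0 : E) ∈ Q) (hx : x ∉ closure Q) :
    ∃ f : StrongDual ℝ E, (∀ y ∈ Q, f y ≤ 0) ∧ f x = 1 := by
  obtain ⟨f, u, hfu, hux⟩ := geometric_hahn_banach_closed_point hconv.closure isClosed_closure hx
  have hu : 0 < u := by simpa using hfu 0 (subset_closure hzero)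
  have hfQ : ∀ y ∈ Q, f y ≤ 0 := by
    intro y hy
    by_contra! hfy
    simpa [hfy.ne'] using hfu _ (subset_closure (hcone _ (div_pos hu hfy) y hy))
  refine ⟨(f x)⁻¹ • f, fun y hy => ?_, by simp [(hu.trans hux).ne']⟩
  simpa using mul_nonpos_of_nonneg_of_nonpos (inv_nonneg.2 (hu.trans hux).le) (hfQ y hy)

section Duality

variable {V W : Type*} [AddCommGroup V] [Module ℝ V]
  [NormedAddCommGroup W] [InnerProductSpace ℝ W]

def feasibleSet (e : V →ₗ[ℝ] W) (g : V →ₗ[ℝ] ℝ) (C : Set V) : Set W :=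
  {h | ∀ β ∈ C, 0 ≤ ⟪h, e β⟫ + g β}

theorem norm_mem_upperBounds_of_mem_feasibleSet {e : V →ₗ[ℝ] W} {g : V →ₗ[ℝ] ℝ} {C : Set V}
    {h : W} (hh : h ∈ feasibleSet e g C) :
    ‖h‖ ∈ upperBounds ((fun β => -g β) '' {β ∈ C | ‖e β‖ ≤ 1}) := by
  rintro _ ⟨β, ⟨hβ, hβ₁⟩, rfl⟩
  calc -g β ≤ ⟪h, e β⟫ := by linarith [hh β hβ]
    _ ≤ ‖h‖ * ‖e β‖ := real_inner_le_norm h (e β)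
    _ ≤ ‖h‖ := mul_le_of_le_one_right (norm_nonneg h) hβ₁

theorem neg_le_mul_norm_of_forall_norm_le_one (e : V →ₗ[ℝ] W) (g : V →ₗ[ℝ] ℝ) {C : Set V}
    (hcone : ∀ c : ℝ, 0 ≤ c → ∀ x ∈ C, c • x ∈ C) {M : ℝ}
    (hM : ∀ β ∈ C, ‖e β‖ ≤ 1 → -g β ≤ M) {β : V} (hβ : β ∈ C) : -g β ≤ M * ‖e β‖ := by
  have hlim : Tendsto (fun r : ℝ => M * r) (𝓝[>] ‖e β‖) (𝓝 (M * ‖e β‖)) :=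
    ((continuous_const.mul continuous_id).tendsto _).mono_left nhdsWithin_le_nhds
  refine ge_of_tendsto hlim (eventually_nhdsWithin_of_forall fun r (hr : ‖e β‖ < r) => ?_)
  have hr₀ : 0 < r := (norm_nonneg _).trans_lt hr
  have hscaled := hM (r⁻¹ • β) (hcone _ (inv_nonneg.2 hr₀.le) β hβ) (by
    rw [map_smul, norm_smul, Real.norm_of_nonneg (inv_nonneg.2 hr₀.le), inv_mul_le_one₀ hr₀]
    exact hr.le)
  rw [map_smul, smul_eq_mul, ← mul_neg, inv_mul_le_iff₀ hr₀] at hscaled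
  linarith

def epigraphCone (e : V →ₗ[ℝ] W) (g : V →ₗ[ℝ] ℝ) (C : Set V) (M : ℝ) : Set (W × ℝ) :=
  {p | ∃ β ∈ C, M * ‖p.1 - e β‖ ≤ p.2 - g β}

variable {e : V →ₗ[ℝ] W} {g : V →ₗ[ℝ] ℝ} {C : Set V} {M : ℝ}

theorem convex_epigraphCone (hconv : Convex ℝ C) (hM : 0 ≤ M) :
    Convex ℝ (epigraphCone e g C M) := by
  rintro ⟨w₁, s₁⟩ ⟨β₁, hβ₁, h₁⟩ ⟨w₂, s₂⟩ ⟨β₂, hβ₂, h₂⟩ a b ha hb hab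
  refine ⟨a • β₁ + b • β₂, hconv hβ₁ hβ₂ ha hb hab, ?_⟩
  have hsub : (a • (w₁, s₁) + b • (w₂, s₂)).1 - e (a • β₁ + b • β₂)
      = a • (w₁ - e β₁) + b • (w₂ - e β₂) := by
    simp only [Prod.fst_add, Prod.smul_fst, map_add, map_smul]
    module
  rw [hsub]
  calc M * ‖a • (w₁ - e β₁) + b • (w₂ - e β₂)‖
      ≤ a * (M * ‖w₁ - e β₁‖) + b * (M * ‖w₂ - e β₂‖) := by
        have := norm_add_le (a • (w₁ - e β₁)) (b • (w₂ - e β₂))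
        rw [norm_smul_of_nonneg ha, norm_smul_of_nonneg hb] at this
        nlinarith
    _ ≤ a * (s₁ - g β₁) + b * (s₂ - g β₂) := by gcongr
    _ = _ := by simp only [Prod.snd_add, Prod.smul_snd, smul_eq_mul, map_add, map_smul]; ring

theorem smul_mem_epigraphCone (hcone : ∀ c : ℝ, 0 ≤ c → ∀ x ∈ C, c • x ∈ C) {c : ℝ}
    (hc : 0 ≤ c) {p : W × ℝ} (hp : p ∈ epigraphCone e g C M) : c • p ∈ epigraphCone e g C M := by
  obtain ⟨β, hβ, hpβ⟩ := hp
  refine ⟨c • β, hcone c hc β hβ, ?_⟩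
  simp only [Prod.smul_fst, Prod.smul_snd, map_smul, ← smul_sub, norm_smul_of_nonneg hc,
    smul_eq_mul]
  nlinarith

theorem epigraphCone_subset (hM : 0 ≤ M) (hkey : ∀ β ∈ C, -g β ≤ M * ‖e β‖) :
    epigraphCone e g C M ⊆ {p | 0 ≤ p.2 + M * ‖p.1‖} := by
  rintro ⟨w, s⟩ ⟨β, hβ, hws : M * ‖w - e β‖ ≤ s - g β⟩
  have htri : ‖e β‖ ≤ ‖w - e β‖ + ‖w‖ := by
    simpa [norm_sub_rev] using norm_sub_norm_le (e β) w
  show 0 ≤ s + M * ‖w‖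
  nlinarith [hkey β hβ, mul_le_mul_of_nonneg_left htri hM]

variable [CompleteSpace W]

theorem exists_mem_feasibleSet_norm_le (hconv : Convex ℝ C)
    (hcone : ∀ c : ℝ, 0 ≤ c → ∀ x ∈ C, c • x ∈ C) (hzero : (0 : V) ∈ C) (hM : 0 ≤ M)
    (hkey : ∀ β ∈ C, -g β ≤ M * ‖e β‖) : ∃ h ∈ feasibleSet e g C, ‖h‖ ≤ M := by
  have hsep : ((0 : W), (-1 : ℝ)) ∉ closure (epigraphCone e g C M) := fun hmem => by
    have := closure_minimal (epigraphCone_subset hM hkey)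
      (isClosed_le continuous_const (by fun_prop)) hmem
    norm_num at this
  obtain ⟨f, hfQ, hf⟩ := exists_forall_le_zero_of_notMem_closure_of_cone (E := W × ℝ)
    (convex_epigraphCone hconv hM) (fun c hc p hp => smul_mem_epigraphCone hcone hc.le hp)
    ⟨0, hzero, by simp⟩ hsep
  let ψ : StrongDual ℝ W := f.comp (.inl ℝ W ℝ)
  have hψ : ∀ p ∈ epigraphCone e g C M, ψ p.1 ≤ p.2 := by
    rintro ⟨w, s⟩ hp
    have hsplit : (w, s) = ContinuousLinearMap.inl ℝ W ℝ w + (-s) • ((0 : W), (-1 : ℝ)) := by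
      ext <;> simp
    have := hfQ _ hp
    rw [hsplit, map_add, map_smul, hf, smul_eq_mul, mul_one] at this
    change f (ContinuousLinearMap.inl ℝ W ℝ w) ≤ s
    linarith
  refine ⟨-(InnerProductSpace.toDual ℝ W).symm ψ, fun β hβ => ?_, ?_⟩
  · have := hψ (e β, g β) ⟨β, hβ, by simp⟩
    simp only [inner_neg_left, InnerProductSpace.toDual_symm_apply]
    linarith
  · rw [norm_neg, LinearIsometryEquiv.norm_map]
    refine ψ.opNorm_le_bound hM fun w => abs_le.2 ⟨?_, hψ (w, M * ‖w‖) ⟨0, hzero, by simp⟩⟩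
    have := hψ (-w, M * ‖w‖) ⟨0, hzero, by simp⟩
    simp only [map_neg] at this
    linarith

variable (e g C) in
theorem isLeast_norm_feasibleSet (hconv : Convex ℝ C)
    (hcone : ∀ c : ℝ, 0 ≤ c → ∀ x ∈ C, c • x ∈ C) (hne : (feasibleSet e g C).Nonempty) :
    IsLeast (norm '' feasibleSet e g C) (sSup ((fun β => -g β) '' {β ∈ C | ‖e β‖ ≤ 1})) := by
  set S := (fun β => -g β) '' {β ∈ C | ‖e β‖ ≤ 1}
  have hlower : sSup S ∈ lowerBounds (norm '' feasibleSet e g C) := by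
    rintro _ ⟨h, hh, rfl⟩
    exact Real.sSup_le (norm_mem_upperBounds_of_mem_feasibleSet hh) (norm_nonneg h)
  obtain ⟨h, hh, hle⟩ : ∃ h ∈ feasibleSet e g C, ‖h‖ ≤ sSup S := by
    rcases C.eq_empty_or_nonempty with rfl | ⟨β₀, hβ₀⟩
    · exact ⟨0, by simp [feasibleSet], by simp [S]⟩
    have hzero : (0 : V) ∈ C := by simpa using hcone 0 le_rfl β₀ hβ₀
    obtain ⟨h₀, hh₀⟩ := hne
    have hbdd : BddAbove S := ⟨‖h₀‖, norm_mem_upperBounds_of_mem_feasibleSet hh₀⟩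
    refine exists_mem_feasibleSet_norm_le hconv hcone hzero
      (Real.sSup_nonneg' ⟨0, ⟨0, ⟨hzero, by simp⟩, by simp⟩, le_rfl⟩) fun β hβ => ?_
    exact neg_le_mul_norm_of_forall_norm_le_one e g hcone
      (fun β hβ hβ₁ => le_csSup hbdd ⟨β, ⟨hβ, hβ₁⟩, rfl⟩) hβ
  exact ⟨⟨h, hh, le_antisymm hle (hlower ⟨h, hh, rfl⟩)⟩, hlower⟩

end Duality

theorem exists_nonneg_eq_inner_add_iff_mem_feasibleSet {V W : Type*} [AddCommGroup V] [Module ℝ V]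
    [TopologicalSpace V] [NormedAddCommGroup W] [InnerProductSpace ℝ W] {e : V →L[ℝ] W}
    {g : V →L[ℝ] ℝ} {C : Set V} {h : W} :
    (∃ H : V →L[ℝ] ℝ, (∀ β ∈ C, 0 ≤ H β) ∧ ∀ β, H β = ⟪h, e β⟫ + g β) ↔
      h ∈ feasibleSet (e : V →ₗ[ℝ] W) (g : V →ₗ[ℝ] ℝ) C := by
  constructor
  · rintro ⟨H, hH, hHe⟩ β hβ
    exact hHe β ▸ hH β hβ
  · intro hh
    exact ⟨(innerSL ℝ h).comp e + g, fun β hβ => by simpa using hh β hβ, fun β => by simp⟩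

/-- `V` plays the role of `H¹(Ω)`, `W` that of `L²(Ω)`, `e : V → W` the embedding
`H¹(Ω) ↪ L²(Ω)` and `C ⊆ V` the cone of nonpositive functions; an element `h ∈ L²(Ω)` acts on
`V` through `β ↦ ⟪h, e β⟫`. -/
theorem stmt_9_general {V W : Type*}
    [NormedAddCommGroup V] [InnerProductSpace ℝ V]
    [NormedAddCommGroup W] [InnerProductSpace ℝ W] [CompleteSpace W]
    (e : V →L[ℝ] W) (C : Set V) (hCconv : Convex ℝ C)
    (hCcone : ∀ c : ℝ, 0 ≤ c → ∀ x ∈ C, c • x ∈ C)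
    (G : Set (V →L[ℝ] ℝ)) (hG : G = {h : V →L[ℝ] ℝ | ∀ β ∈ C, 0 ≤ h β})
    (g : V →L[ℝ] ℝ)
    (hfeas : ∃ h : W, ((fun β => ⟪h, e β⟫) : V → ℝ) ∈
      {φ : V → ℝ | ∃ H ∈ G, ∀ β, (H β : ℝ) = φ β + g β}) :
    sSup ((fun β => -(g β)) '' {β ∈ C | ‖e β‖ ≤ 1})
      = sInf {r : ℝ | ∃ h : W, ‖h‖ = r ∧
          (∃ H ∈ G, ∀ β, (H β : ℝ) = ⟪h, e β⟫ + g β)} ∧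
    ∃ h : W, (∃ H ∈ G, ∀ β, (H β : ℝ) = ⟪h, e β⟫ + g β) ∧
      ‖h‖ = sInf {r : ℝ | ∃ h' : W, ‖h'‖ = r ∧
          (∃ H ∈ G, ∀ β, (H β : ℝ) = ⟪h', e β⟫ + g β)} := by
  subst hG
  simp only [Set.mem_ofPred_eq, exists_nonneg_eq_inner_add_iff_mem_feasibleSet] at hfeas ⊢
  have hleast := isLeast_norm_feasibleSet (e : V →ₗ[ℝ] W) (g : V →ₗ[ℝ] ℝ) C hCconv hCcone hfeas
  have hvalues : {r | ∃ h : W, ‖h‖ = r ∧ h ∈ feasibleSet (e : V →ₗ[ℝ] W) (g : V →ₗ[ℝ] ℝ) C}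
      = norm '' feasibleSet (e : V →ₗ[ℝ] W) (g : V →ₗ[ℝ] ℝ) C := by
    ext r
    simp [and_comm]
  rw [hvalues, hleast.csInf_eq]
  exact ⟨rfl, hleast.1⟩

/-- Abstract version of `Φ(g) = d₂(g, G)`.  Here `V` plays the role of
`H¹(Ω)`, `W` that of `L²(Ω)`, `e : V → W` the embedding `H¹(Ω) ↪ L²(Ω)`,
`C ⊆ V` the convex cone of nonpositive functions,
`G = {h ∈ V' : ⟨h, β⟩ ≥ 0 ∀ β ∈ C}` and `F = {β ∈ C : ‖β‖_{L²} ≤ 1}`.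
An element `h ∈ L²(Ω)` acts on `V` through `β ↦ ⟪h, e β⟫`.  If the feasible
set `{h ∈ L² : h + g ∈ G}` is nonempty, then
`Φ(g) := sup_{β ∈ F} ⟨−g, β⟩ = min {‖h‖_{L²} : h + g ∈ G}`. -/
theorem stmt_9 {V W : Type*}
    [NormedAddCommGroup V] [InnerProductSpace ℝ V] [CompleteSpace V]
    [NormedAddCommGroup W] [InnerProductSpace ℝ W] [CompleteSpace W]
    (e : V →L[ℝ] W) (C : Set V) (hCconv : Convex ℝ C)
    (hCcone : ∀ c : ℝ, 0 ≤ c → ∀ x ∈ C, c • x ∈ C) (hCcl : IsClosed C)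
    (G : Set (V →L[ℝ] ℝ)) (hG : G = {h : V →L[ℝ] ℝ | ∀ β ∈ C, 0 ≤ h β})
    (g : V →L[ℝ] ℝ)
    (hfeas : ∃ h : W, ((fun β => ⟪h, e β⟫) : V → ℝ) ∈
      {φ : V → ℝ | ∃ H ∈ G, ∀ β, (H β : ℝ) = φ β + g β}) :
    sSup ((fun β => -(g β)) '' {β ∈ C | ‖e β‖ ≤ 1})
      = sInf {r : ℝ | ∃ h : W, ‖h‖ = r ∧
          (∃ H ∈ G, ∀ β, (H β : ℝ) = ⟪h, e β⟫ + g β)} ∧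
    ∃ h : W, (∃ H ∈ G, ∀ β, (H β : ℝ) = ⟪h, e β⟫ + g β) ∧
      ‖h‖ = sInf {r : ℝ | ∃ h' : W, ‖h'‖ = r ∧
          (∃ H ∈ G, ∀ β, (H β : ℝ) = ⟪h', e β⟫ + g β)} :=
  stmt_9_general e C hCconv hCcone G hG g hfeas
end

section
/- Let t°: [0,S] → [0,T] be nondecreasing and 1-Lipschitz, and let (t_ε) be a sequence of nondecreasing 1-Lipschitz functions converging to t° weakly* in W^{1,∞}(0,S). Let D° := {s ∈ (0,S) : ṫ°(s) = 0}. Then limsup_{ε→0} ṫ_ε(s) > 0 for a.e. s ∈ (0,S) \ D°. -/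
/-!
On `(0,S)` all derivatives lie in `[0,1]`. If the conclusion failed on a set `A` of positive
measure, then `ṫ_n → 0` pointwise on `A`, so by dominated convergence `∫_A ṫ_n → 0`; testing the
weak* convergence against `𝟙_A` gives `∫_A ṫ_n → ∫_A ṫ° > 0`, a contradiction.
-/

open MeasureTheory Filter Set Topology NNReal ENNReal

lemma deriv_mem_Icc_of_monotoneOn_of_lipschitzOnWith {f : ℝ → ℝ} {s : Set ℝ} {x : ℝ}
    {K : ℝ≥0} (hs : s ∈ 𝓝 x) (hmono : MonotoneOn f s) (hlip : LipschitzOnWith K f s) :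
    deriv f x ∈ Icc 0 (K : ℝ) := by
  refine ⟨?_, (le_abs_self _).trans (norm_deriv_le_of_lipschitzOn hs hlip)⟩
  rw [← derivWithin_of_mem_nhds hs]
  exact hmono.derivWithin_nonneg

lemma tendsto_nhds_zero_of_nonneg_of_limsup_nonpos {ι : Type*} {l : Filter ι} [l.NeBot]
    {u : ι → ℝ} (h0 : ∀ i, 0 ≤ u i) (hbdd : IsBoundedUnder (· ≤ ·) l u)
    (hlim : limsup u l ≤ 0) : Tendsto u l (𝓝 0) :=
  tendsto_of_le_liminf_of_limsup_le
    (le_liminf_of_le hbdd.isCoboundedUnder_ge (Eventually.of_forall h0)) hlim hbdd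
    (isBoundedUnder_of ⟨0, h0⟩)

lemma setIntegral_mul_indicator_one {α : Type*} [MeasurableSpace α] {μ : Measure α}
    {s A : Set α} (hA : MeasurableSet A) (hAs : A ⊆ s) (g : α → ℝ) :
    ∫ x in s, g x * A.indicator 1 x ∂μ = ∫ x in A, g x ∂μ := by
  simp_rw [← indicator_mul_right, Pi.one_apply, mul_one]
  rw [setIntegral_indicator hA, inter_eq_right.2 hAs]

lemma measure_eq_zero_of_tendsto_setIntegral {α : Type*} [MeasurableSpace α] {μ : Measure α}
    {A : Set α} (hA : MeasurableSet A) (hμA : μ A ≠ ∞) {f : ℕ → α → ℝ} {g : α → ℝ} {C : ℝ}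
    (hf : ∀ n, AEStronglyMeasurable (f n) (μ.restrict A)) (hfC : ∀ n, ∀ x ∈ A, ‖f n x‖ ≤ C)
    (hf0 : ∀ x ∈ A, Tendsto (f · x) atTop (𝓝 0)) (hg : IntegrableOn g A μ)
    (hgpos : ∀ x ∈ A, 0 < g x)
    (hlim : Tendsto (fun n => ∫ x in A, f n x ∂μ) atTop (𝓝 (∫ x in A, g x ∂μ))) :
    μ A = 0 := by
  have hdom : Tendsto (fun n => ∫ x in A, f n x ∂μ) atTop (𝓝 0) := by
    simpa using tendsto_integral_of_dominated_convergence (fun _ => C) hf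
      (integrableOn_const hμA) (fun n => ae_restrict_of_forall_mem hA (hfC n))
      (ae_restrict_of_forall_mem hA hf0)
  have hg0 : ∫ x in A, g x ∂μ = 0 := tendsto_nhds_unique hlim hdom
  by_contra hA0
  have hsupp : Function.support g ∩ A = A := inter_eq_right.2 fun x hx => (hgpos x hx).ne'
  have := (setIntegral_pos_iff_support_of_nonneg_ae
    (ae_restrict_of_forall_mem hA fun x hx => (hgpos x hx).le) hg).2
    (by rw [hsupp]; exact pos_iff_ne_zero.2 hA0)
  exact this.ne' hg0

theorem stmt_18_general (S : ℝ)
    (tε : ℕ → ℝ → ℝ) (t0 : ℝ → ℝ)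
    (hmono : ∀ n, MonotoneOn (tε n) (Set.Icc 0 S))
    (hlip : ∀ n, LipschitzOnWith 1 (tε n) (Set.Icc 0 S))
    (hmono0 : MonotoneOn t0 (Set.Icc 0 S))
    (hlip0 : LipschitzOnWith 1 t0 (Set.Icc 0 S))
    (hweak : ∀ φ : ℝ → ℝ, IntegrableOn φ (Set.Ioo 0 S) volume →
      Tendsto (fun n => ∫ s in Set.Ioo (0:ℝ) S, deriv (tε n) s * φ s)
        atTop (nhds (∫ s in Set.Ioo (0:ℝ) S, deriv t0 s * φ s))) :
    ∀ᵐ s ∂(volume.restrict (Set.Ioo (0:ℝ) S)),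
      deriv t0 s ≠ 0 → 0 < limsup (fun n => deriv (tε n) s) atTop := by
  have hderiv {f : ℝ → ℝ} (hf : MonotoneOn f (Icc 0 S)) (hf' : LipschitzOnWith 1 f (Icc 0 S))
      {s : ℝ} (hs : s ∈ Ioo 0 S) : deriv f s ∈ Icc 0 1 := by
    simpa using deriv_mem_Icc_of_monotoneOn_of_lipschitzOnWith (Icc_mem_nhds hs.1 hs.2) hf hf'
  have hnorm {f : ℝ → ℝ} (hf : MonotoneOn f (Icc 0 S)) (hf' : LipschitzOnWith 1 f (Icc 0 S))
      {s : ℝ} (hs : s ∈ Ioo 0 S) : ‖deriv f s‖ ≤ 1 :=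
    (Real.norm_of_nonneg (hderiv hf hf' hs).1).trans_le (hderiv hf hf' hs).2
  set A := Ioo 0 S ∩ {s | deriv t0 s ≠ 0} ∩ {s | limsup (fun n => deriv (tε n) s) atTop ≤ 0}
  have hAsub : A ⊆ Ioo 0 S := inter_subset_left.trans inter_subset_left
  have hA : MeasurableSet A :=
    (measurableSet_Ioo.inter (measurable_deriv t0 (measurableSet_singleton 0).compl)).inter
      (measurableSet_le (Measurable.limsup fun n => measurable_deriv _) measurable_const)
  have hAfin : volume A ≠ ∞ := ((measure_mono hAsub).trans_lt measure_Ioo_lt_top).ne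
  suffices volume A = 0 by
    rw [ae_restrict_iff' measurableSet_Ioo]
    refine measure_mono_null (fun s hs => ?_) this
    simp_all [A]
  refine measure_eq_zero_of_tendsto_setIntegral (C := 1) hA hAfin
    (fun n => (measurable_deriv (tε n)).aestronglyMeasurable)
    (fun n s hs => hnorm (hmono n) (hlip n) (hAsub hs))
    (fun s hs => tendsto_nhds_zero_of_nonneg_of_limsup_nonpos
      (fun n => (hderiv (hmono n) (hlip n) (hAsub hs)).1)
      (isBoundedUnder_of ⟨1, fun n => (hderiv (hmono n) (hlip n) (hAsub hs)).2⟩) hs.2)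
    (Measure.integrableOn_of_bounded hAfin (measurable_deriv t0).aestronglyMeasurable
      (ae_restrict_of_forall_mem hA fun s hs => hnorm hmono0 hlip0 (hAsub hs)))
    (fun s hs => (hderiv hmono0 hlip0 (hAsub hs)).1.lt_of_ne' hs.1.2) ?_
  simpa only [setIntegral_mul_indicator_one hA hAsub] using
    hweak (A.indicator 1) ((integrableOn_const measure_Ioo_lt_top.ne).indicator hA)

/-- Let `t_n` be nondecreasing 1-Lipschitz functions on `[0,S]` converging
weakly* in `W^{1,∞}(0,S)` (i.e. uniformly, with weak* convergence of the
derivatives) to a nondecreasing 1-Lipschitz `t°`.  Then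
`limsup_n ṫ_n(s) > 0` for a.e. `s ∈ (0,S)` outside
`D° = {s : ṫ°(s) = 0}`. -/
theorem stmt_18 (S : ℝ) (hS : 0 < S)
    (tε : ℕ → ℝ → ℝ) (t0 : ℝ → ℝ)
    (hmono : ∀ n, MonotoneOn (tε n) (Set.Icc 0 S))
    (hlip : ∀ n, LipschitzOnWith 1 (tε n) (Set.Icc 0 S))
    (hmono0 : MonotoneOn t0 (Set.Icc 0 S))
    (hlip0 : LipschitzOnWith 1 t0 (Set.Icc 0 S))
    (hunif : TendstoUniformlyOn (fun n => tε n) t0 atTop (Set.Icc 0 S))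
    (hweak : ∀ φ : ℝ → ℝ, IntegrableOn φ (Set.Ioo 0 S) volume →
      Tendsto (fun n => ∫ s in Set.Ioo (0:ℝ) S, deriv (tε n) s * φ s)
        atTop (nhds (∫ s in Set.Ioo (0:ℝ) S, deriv t0 s * φ s))) :
    ∀ᵐ s ∂(volume.restrict (Set.Ioo (0:ℝ) S)),
      deriv t0 s ≠ 0 → 0 < limsup (fun n => deriv (tε n) s) atTop :=
  stmt_18_general S tε t0 hmono hlip hmono0 hlip0 hweak
end
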